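/- If S is an abelian subgroup of the n-qubit Pauli group not containing -I, generated by m independent generators, then the common +1 eigenspace of all elements of S (the code space) has dimension 2^(n-m). -/

import Mathlib

open Matrix

open Matrix

/-- The single-qubit Pauli matrices `I, X, Y, Z`. -/
noncomputable def pauliMat : Fin 4 → Matrix (Fin 2) (Fin 2) ℂ
  | 0 => 1
  | 1 => !![0, 1; 1, 0]
  | 2 => !![0, -Complex.I; Complex.I, 0]
  | 3 => !![1, 0; 0, -1]

/-- The tensor product `P_1 ⊗ ⋯ ⊗ P_n` of single-qubit Pauli matrices,
as a matrix acting on `(ℂ²)^⊗n` (indexed by `Fin n → Fin 2`). -/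
noncomputable def pauliTensor {n : ℕ} (s : Fin n → Fin 4) :
    Matrix (Fin n → Fin 2) (Fin n → Fin 2) ℂ :=
  Matrix.of fun f g => ∏ j, pauliMat (s j) (f j) (g j)

/-- The allowed phases `±1, ±i` in the Pauli group. -/
def IsPauliPhase (c : ℂ) : Prop :=
  c = 1 ∨ c = -1 ∨ c = Complex.I ∨ c = -Complex.I

/-- Membership in the `n`-qubit Pauli group: `U = c · (P_1 ⊗ ⋯ ⊗ P_n)`. -/
def IsPauli {n : ℕ} (U : Matrix (Fin n → Fin 2) (Fin n → Fin 2) ℂ) : Prop :=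
  ∃ (c : ℂ) (s : Fin n → Fin 4), IsPauliPhase c ∧ U = c • pauliTensor s

/-- The (ordered) product `∏_{j ∈ T} g j` of a subset of the generators;
since the generators are assumed to commute this represents the group
element associated to the subset `T`. -/
noncomputable def subsetProd {n m : ℕ}
    (g : Fin m → Matrix (Fin n → Fin 2) (Fin n → Fin 2) ℂ)
    (T : Finset (Fin m)) : Matrix (Fin n → Fin 2) (Fin n → Fin 2) ℂ :=
  (List.ofFn fun j : Fin m => if j ∈ T then g j else 1).prod

/-- The code space: the common `+1` eigenspace of all the generators. -/
noncomputable def codeSpace {n m : ℕ}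
    (g : Fin m → Matrix (Fin n → Fin 2) (Fin n → Fin 2) ℂ) :
    Submodule ℂ ((Fin n → Fin 2) → ℂ) :=
  ⨅ j, LinearMap.ker ((g j).mulVecLin - LinearMap.id)

/-!
The code space is the range of `P = 2⁻ᵐ ∑_T g_T`, the average over the `2^m` elements of the
stabilizer group: multiplying by `g_j` permutes the terms (`T ↦ {j} ∆ T`), so `g_j P = P`, while
`P` fixes every code vector. Hence `dim = tr P`. A Pauli operator of nonzero trace is a scalar
`c • 1`, and for `T ≠ ∅` this is impossible: `g_T² = 1` forces `c = ±1`, excluded by independence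
and by `-1 ∉ S`. So only `T = ∅` contributes and `tr P = 2⁻ᵐ · 2ⁿ`.
-/

open scoped symmDiff

universe u

theorem Finset.prod_mul_prod_eq_prod_symmDiff {α β : Type*} [DecidableEq α] [CommMonoid β]
    {f : α → β} (hf : ∀ a, f a * f a = 1) (s t : Finset α) :
    (∏ a ∈ s, f a) * ∏ a ∈ t, f a = ∏ a ∈ s ∆ t, f a := by
  calc (∏ a ∈ s, f a) * ∏ a ∈ t, f a
      = (∏ a ∈ s ∪ t, f a) * ∏ a ∈ s ∩ t, f a := Finset.prod_union_inter.symm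
    _ = (∏ a ∈ s ∆ t, f a) * ∏ a ∈ s ∩ t, f a * f a := by
        rw [show s ∪ t = s ∆ t ∪ s ∩ t from (symmDiff_sup_inf s t).symm,
          Finset.prod_union (s₁ := s ∆ t) (s₂ := s ∩ t) (disjoint_symmDiff_inf s t),
          Finset.prod_mul_distrib, mul_assoc]
    _ = ∏ a ∈ s ∆ t, f a := by simp only [hf, Finset.prod_const_one, mul_one]

open scoped IsMulCommutative in
theorem exists_injective_monoidHom_of_commute {M : Type u} [Monoid M] {ι : Type*} (g : ι → M)
    (hcomm : ∀ i j, g i * g j = g j * g i) :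
    ∃ (N : Type u) (_ : CommMonoid N) (φ : N →* M) (G : ι → N),
      Function.Injective φ ∧ ∀ i, φ (G i) = g i := by
  have := Submonoid.isMulCommutative_closure M (s := Set.range g)
    (by rintro _ ⟨i, rfl⟩ _ ⟨j, rfl⟩; exact hcomm i j)
  exact ⟨Submonoid.closure (Set.range g), inferInstance, Submonoid.subtype _,
    fun i => ⟨g i, Submonoid.subset_closure ⟨i, rfl⟩⟩, Subtype.val_injective, fun _ => rfl⟩

theorem Matrix.finrank_eq_trace_of_isProj {ι K : Type*} [Fintype ι] [DecidableEq ι] [Field K]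
    {p : Submodule K (ι → K)} {A : Matrix ι ι K} (h : LinearMap.IsProj p A.mulVecLin) :
    (Module.finrank K p : K) = A.trace := by
  rw [← Matrix.trace_toLin'_eq, Matrix.toLin'_apply', h.trace]

section SubsetProd

variable {n m : ℕ} {g : Fin m → Matrix (Fin n → Fin 2) (Fin n → Fin 2) ℂ}

theorem subsetProd_mem {S : Submonoid (Matrix (Fin n → Fin 2) (Fin n → Fin 2) ℂ)}
    (hg : ∀ j, g j ∈ S) (T : Finset (Fin m)) : subsetProd g T ∈ S := by
  refine S.list_prod_mem fun A hA => ?_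
  obtain ⟨j, rfl⟩ := List.mem_ofFn.mp hA
  split_ifs
  · exact hg j
  · exact S.one_mem

theorem subsetProd_empty : subsetProd g ∅ = 1 := by
  simp [subsetProd]

theorem subsetProd_eq_map_prod {N : Type*} [CommMonoid N]
    (φ : N →* Matrix (Fin n → Fin 2) (Fin n → Fin 2) ℂ) {G : Fin m → N}
    (hG : ∀ j, φ (G j) = g j) (T : Finset (Fin m)) :
    subsetProd g T = φ (∏ j ∈ T, G j) := by
  have hsplit : ∏ j ∈ T, G j = ∏ j, if j ∈ T then G j else 1 := by
    rw [Finset.prod_ite_mem, Finset.univ_inter]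
  rw [hsplit, ← Fin.prod_ofFn, map_list_prod, List.map_ofFn, subsetProd]
  congr
  funext j
  simp only [Function.comp_apply, apply_ite φ, map_one, hG]

theorem subsetProd_mul_subsetProd (hcomm : ∀ j l, g j * g l = g l * g j)
    (hsq : ∀ j, g j * g j = 1) (T T' : Finset (Fin m)) :
    subsetProd g T * subsetProd g T' = subsetProd g (T ∆ T') := by
  obtain ⟨N, _, φ, G, hφ, hG⟩ := exists_injective_monoidHom_of_commute g hcomm
  have hG2 : ∀ j, G j * G j = 1 := fun j => hφ (by rw [map_mul, hG, hsq, map_one])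
  simp only [subsetProd_eq_map_prod φ hG, ← map_mul, Finset.prod_mul_prod_eq_prod_symmDiff hG2]

theorem subsetProd_singleton (hcomm : ∀ j l, g j * g l = g l * g j) (j : Fin m) :
    subsetProd g {j} = g j := by
  obtain ⟨N, _, φ, G, -, hG⟩ := exists_injective_monoidHom_of_commute g hcomm
  rw [subsetProd_eq_map_prod φ hG, Finset.prod_singleton, hG]

end SubsetProd

section Pauli

def pauliMul : Fin 4 → Fin 4 → Fin 4 :=
  ![![0, 1, 2, 3], ![1, 0, 3, 2], ![2, 3, 0, 1], ![3, 2, 1, 0]]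

noncomputable def pauliPhase : Fin 4 → Fin 4 → ℂ :=
  ![![1, 1, 1, 1], ![1, 1, Complex.I, -Complex.I], ![1, -Complex.I, 1, Complex.I],
    ![1, Complex.I, -Complex.I, 1]]

theorem pauliMat_mul (a b : Fin 4) :
    pauliMat a * pauliMat b = pauliPhase a b • pauliMat (pauliMul a b) := by
  fin_cases a <;> fin_cases b <;> ext i j <;> fin_cases i <;> fin_cases j <;>
    simp [pauliMat, pauliMul, pauliPhase, Matrix.mul_apply, Fin.sum_univ_two, Matrix.one_apply]

theorem isPauliPhase_pauliPhase (a b : Fin 4) : IsPauliPhase (pauliPhase a b) := by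
  fin_cases a <;> fin_cases b <;> simp [pauliPhase, IsPauliPhase]

theorem IsPauliPhase.mul {c d : ℂ} (hc : IsPauliPhase c) (hd : IsPauliPhase d) :
    IsPauliPhase (c * d) := by
  rcases hc with rfl | rfl | rfl | rfl <;> rcases hd with rfl | rfl | rfl | rfl <;>
    simp [IsPauliPhase]

theorem trace_pauliMat_of_ne_zero {a : Fin 4} (ha : a ≠ 0) : (pauliMat a).trace = 0 := by
  fin_cases a <;> simp_all [pauliMat, Matrix.trace, Fin.sum_univ_two]

variable {n : ℕ}

theorem pauliTensor_zero : pauliTensor (0 : Fin n → Fin 4) = 1 := by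
  ext f h
  simp [pauliTensor, pauliMat, Matrix.one_apply, Fintype.prod_boole, funext_iff]

theorem pauliTensor_mul (s t : Fin n → Fin 4) :
    pauliTensor s * pauliTensor t =
      (∏ j, pauliPhase (s j) (t j)) • pauliTensor (fun j => pauliMul (s j) (t j)) := by
  ext f h
  have hentry : ∀ j, ∑ x : Fin 2, pauliMat (s j) (f j) x * pauliMat (t j) x (h j)
      = pauliPhase (s j) (t j) * pauliMat (pauliMul (s j) (t j)) (f j) (h j) := fun j => by
    simpa [Matrix.mul_apply] using congrFun (congrFun (pauliMat_mul (s j) (t j)) (f j)) (h j)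
  simp only [Matrix.mul_apply, pauliTensor, Matrix.of_apply, Matrix.smul_apply, smul_eq_mul,
    ← Finset.prod_mul_distrib, ← hentry]
  exact (Fintype.prod_sum fun j x => pauliMat (s j) (f j) x * pauliMat (t j) x (h j)).symm

theorem trace_pauliTensor (s : Fin n → Fin 4) :
    (pauliTensor s).trace = ∏ j, (pauliMat (s j)).trace := by
  simp only [Matrix.trace, Matrix.diag, pauliTensor, Matrix.of_apply]
  exact (Fintype.prod_sum fun j x => pauliMat (s j) x x).symm

theorem IsPauli.one : IsPauli (1 : Matrix (Fin n → Fin 2) (Fin n → Fin 2) ℂ) :=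
  ⟨1, 0, Or.inl rfl, by rw [pauliTensor_zero, one_smul]⟩

theorem IsPauli.mul {U V : Matrix (Fin n → Fin 2) (Fin n → Fin 2) ℂ}
    (hU : IsPauli U) (hV : IsPauli V) : IsPauli (U * V) := by
  obtain ⟨c, s, hc, rfl⟩ := hU
  obtain ⟨d, t, hd, rfl⟩ := hV
  refine ⟨c * d * ∏ j, pauliPhase (s j) (t j), fun j => pauliMul (s j) (t j), ?_, ?_⟩
  · exact (hc.mul hd).mul <| Finset.prod_induction _ _ (fun _ _ => IsPauliPhase.mul)
      (Or.inl rfl) fun _ _ => isPauliPhase_pauliPhase _ _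
  · rw [Matrix.smul_mul, Matrix.mul_smul, pauliTensor_mul, smul_smul, smul_smul, mul_assoc]

variable (n) in
def pauliSubmonoid : Submonoid (Matrix (Fin n → Fin 2) (Fin n → Fin 2) ℂ) where
  carrier := {U | IsPauli U}
  mul_mem' := IsPauli.mul
  one_mem' := IsPauli.one

theorem IsPauli.eq_smul_one_of_trace_ne_zero {U : Matrix (Fin n → Fin 2) (Fin n → Fin 2) ℂ}
    (hU : IsPauli U) (htr : U.trace ≠ 0) : ∃ c : ℂ, U = c • 1 := by
  obtain ⟨c, s, -, rfl⟩ := hU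
  have hs : s = 0 := by
    by_contra hs
    obtain ⟨j, hj⟩ := Function.ne_iff.mp hs
    apply htr
    rw [Matrix.trace_smul, trace_pauliTensor,
      Finset.prod_eq_zero (Finset.mem_univ j) (trace_pauliMat_of_ne_zero hj), smul_zero]
  exact ⟨c, by rw [hs, pauliTensor_zero]⟩

end Pauli

section CodeSpace

variable {n m : ℕ} {g : Fin m → Matrix (Fin n → Fin 2) (Fin n → Fin 2) ℂ}

theorem mem_codeSpace_iff {v : (Fin n → Fin 2) → ℂ} :
    v ∈ codeSpace g ↔ ∀ j, g j *ᵥ v = v := by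
  simp [codeSpace, Submodule.mem_iInf, sub_eq_zero]

variable (g) in
noncomputable def codeProjector : Matrix (Fin n → Fin 2) (Fin n → Fin 2) ℂ :=
  ((2 : ℂ) ^ m)⁻¹ • ∑ T : Finset (Fin m), subsetProd g T

theorem mul_codeProjector (hcomm : ∀ j l, g j * g l = g l * g j) (hsq : ∀ j, g j * g j = 1)
    (j : Fin m) : g j * codeProjector g = codeProjector g := by
  rw [codeProjector, Matrix.mul_smul, Finset.mul_sum]
  congr 1
  calc ∑ T, g j * subsetProd g T = ∑ T, subsetProd g ({j} ∆ T) := by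
        simp only [← subsetProd_mul_subsetProd hcomm hsq, subsetProd_singleton hcomm]
    _ = ∑ T, subsetProd g T :=
      Equiv.sum_comp ((symmDiff_right_involutive ({j} : Finset (Fin m))).toPerm _) (subsetProd g)

theorem codeProjector_mulVec_of_mem {v : (Fin n → Fin 2) → ℂ} (hv : v ∈ codeSpace g) :
    codeProjector g *ᵥ v = v := by
  let fixingSubmonoid : Submonoid (Matrix (Fin n → Fin 2) (Fin n → Fin 2) ℂ) :=
    { carrier := {A | A *ᵥ v = v}
      mul_mem' := fun {A B} (hA : A *ᵥ v = v) (hB : B *ᵥ v = v) => by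
        show (A * B) *ᵥ v = v
        rw [← Matrix.mulVec_mulVec, hB, hA]
      one_mem' := Matrix.one_mulVec v }
  have hfix : ∀ T, subsetProd g T *ᵥ v = v :=
    subsetProd_mem (S := fixingSubmonoid) (mem_codeSpace_iff.mp hv)
  simp only [codeProjector, Matrix.smul_mulVec, Matrix.sum_mulVec, hfix, Finset.sum_const,
    Finset.card_univ, Fintype.card_finset, Fintype.card_fin, ← Nat.cast_smul_eq_nsmul ℂ,
    smul_smul, Nat.cast_pow, Nat.cast_ofNat]
  rw [inv_mul_cancel₀ (pow_ne_zero _ two_ne_zero), one_smul]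

theorem isProj_codeProjector (hcomm : ∀ j l, g j * g l = g l * g j)
    (hsq : ∀ j, g j * g j = 1) : LinearMap.IsProj (codeSpace g) (codeProjector g).mulVecLin where
  map_mem v := mem_codeSpace_iff.mpr fun j => by
    rw [Matrix.mulVecLin_apply, Matrix.mulVec_mulVec, mul_codeProjector hcomm hsq]
  map_id _ := codeProjector_mulVec_of_mem

theorem trace_subsetProd_eq_zero (hPauli : ∀ j, IsPauli (g j))
    (hcomm : ∀ j l, g j * g l = g l * g j) (hsq : ∀ j, g j * g j = 1)
    (hindep : ∀ T : Finset (Fin m), subsetProd g T = 1 → T = ∅)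
    (hnegI : ∀ T : Finset (Fin m), subsetProd g T ≠ -1) {T : Finset (Fin m)} (hT : T ≠ ∅) :
    (subsetProd g T).trace = 0 := by
  by_contra htr
  obtain ⟨c, hc⟩ :=
    (subsetProd_mem (S := pauliSubmonoid n) hPauli T).eq_smul_one_of_trace_ne_zero htr
  have hc2 : c * c = 1 := by
    have hsqT := subsetProd_mul_subsetProd hcomm hsq T T
    rw [symmDiff_self, Finset.bot_eq_empty, subsetProd_empty, hc, smul_mul_smul, mul_one] at hsqT
    simpa using congrFun (congrFun hsqT 0) 0
  rcases mul_self_eq_one_iff.mp hc2 with rfl | rfl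
  · exact hT (hindep T (by rw [hc, one_smul]))
  · exact hnegI T (by rw [hc, neg_one_smul])

theorem trace_codeProjector (hmn : m ≤ n) (hPauli : ∀ j, IsPauli (g j))
    (hcomm : ∀ j l, g j * g l = g l * g j) (hsq : ∀ j, g j * g j = 1)
    (hindep : ∀ T : Finset (Fin m), subsetProd g T = 1 → T = ∅)
    (hnegI : ∀ T : Finset (Fin m), subsetProd g T ≠ -1) :
    (codeProjector g).trace = 2 ^ (n - m) := by
  rw [codeProjector, Matrix.trace_smul, Matrix.trace_sum, Finset.sum_eq_single ∅
    (fun T _ hT => trace_subsetProd_eq_zero hPauli hcomm hsq hindep hnegI hT) (by simp),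
    subsetProd_empty, Matrix.trace_one, Fintype.card_fun, Fintype.card_fin, Fintype.card_fin,
    smul_eq_mul, inv_mul_eq_iff_eq_mul₀ (pow_ne_zero _ two_ne_zero)]
  push_cast
  rw [← pow_add, Nat.add_sub_cancel' hmn]

end CodeSpace

/-- A stabilizer group on `n` qubits generated by `m` independent,
commuting Pauli generators (squaring to the identity, with `-I` not in the
group) has a code space of dimension `2^(n-m)`. -/
theorem stabilizer_code_space_dim (n m : ℕ) (hmn : m ≤ n)
    (g : Fin m → Matrix (Fin n → Fin 2) (Fin n → Fin 2) ℂ)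
    (hPauli : ∀ j, IsPauli (g j))
    (hcomm : ∀ j l, g j * g l = g l * g j)
    (hsq : ∀ j, g j * g j = 1)
    (hindep : ∀ T : Finset (Fin m), subsetProd g T = 1 → T = ∅)
    (hnegI : ∀ T : Finset (Fin m), subsetProd g T ≠ -1) :
    Module.finrank ℂ (codeSpace g) = 2 ^ (n - m) := by
  have hdim := Matrix.finrank_eq_trace_of_isProj (isProj_codeProjector hcomm hsq)
  rw [trace_codeProjector hmn hPauli hcomm hsq hindep hnegI] at hdim
  exact_mod_cast hdim
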